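/- Let z ∈ (0, 1) and take the five-point scheme with σ = z(1 − z²)/6 and τ = −σ/2. Let Φ : ℤ → ℝ be square-summable over j ≤ 0 and satisfy the type-1 second-order extrapolation conditions (ΔΦ)₀ = 0 and (D₀ΔΦ)₀ = 0 (these determine the ghost values Φ₁ = 2Φ₀ − Φ_{−1} and Φ₂ = 4Φ₀ − 4Φ_{−1} + Φ_{−2}). Define Ψ_j := (A(z)Φ)_j for j ≤ 0. Then ∑_{j ≤ −1} Ψ_j² + (1/2)·Ψ₀² ≤ ∑_{j ≤ −1} Φ_j² + (1/2)·Φ₀²; that is, the scheme with this boundary closure is semi-bounded for the weighted norm with weight 1/2 at j = 0. -/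
import Mathlib


/-- Backward difference `(DΦ)_j = Φ_j - Φ_{j-1}`. -/
noncomputable def Dd (Φ : ℤ → ℝ) (j : ℤ) : ℝ := Φ j - Φ (j - 1)

/-- Centered difference `(D₀Φ)_j = (Φ_{j+1} - Φ_{j-1})/2`. -/
noncomputable def D0 (Φ : ℤ → ℝ) (j : ℤ) : ℝ := (Φ (j + 1) - Φ (j - 1)) / 2

/-- Discrete Laplacian `(ΔΦ)_j = Φ_{j-1} - 2Φ_j + Φ_{j+1}`. -/
noncomputable def Lap (Φ : ℤ → ℝ) (j : ℤ) : ℝ := Φ (j - 1) - 2 * Φ j + Φ (j + 1)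

/-- `(DΔΦ)_j = (ΔΦ)_j - (ΔΦ)_{j-1}`. -/
noncomputable def DLap (Φ : ℤ → ℝ) (j : ℤ) : ℝ := Lap Φ j - Lap Φ (j - 1)

/-- `(D₀ΔΦ)_j = (-Φ_{j-2} + 2Φ_{j-1} - 2Φ_{j+1} + Φ_{j+2})/2`. -/
noncomputable def D0Lap (Φ : ℤ → ℝ) (j : ℤ) : ℝ :=
  (-Φ (j - 2) + 2 * Φ (j - 1) - 2 * Φ (j + 1) + Φ (j + 2)) / 2

/-- `(Δ²Φ)_j = Φ_{j-2} - 4Φ_{j-1} + 6Φ_j - 4Φ_{j+1} + Φ_{j+2}`. -/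
noncomputable def Lap2 (Φ : ℤ → ℝ) (j : ℤ) : ℝ :=
  Φ (j - 2) - 4 * Φ (j - 1) + 6 * Φ j - 4 * Φ (j + 1) + Φ (j + 2)

/-- The five point scheme `A(z)Φ = Φ - z D₀Φ + (z²/2) ΔΦ + σ D₀ΔΦ + τ Δ²Φ`. -/
noncomputable def A5 (z σ τ : ℝ) (Φ : ℤ → ℝ) (j : ℤ) : ℝ :=
  Φ j - z * D0 Φ j + z ^ 2 / 2 * Lap Φ j + σ * D0Lap Φ j + τ * Lap2 Φ j

/-! ### Auxiliary material -/

/-- Boundary/telescoping bilinear functional for the energy identity. -/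
noncomputable def Gbnd (z : ℝ) (Φ : ℤ → ℝ) (j : ℤ) : ℝ :=
  (z/6 - z^3/4 + z^5/12) * Φ (j-1)^2
  + (-(2*z/3) - z^2/3 + z^3 + z^4/3 - z^5/3) * (Φ (j-1) * Φ j)
  + (z^2/3 - z^3/6 - z^4/3 + z^5/6) * (Φ (j-1) * Φ (j+1))
  + (5*z/6 + 7*z^2/6 - 2*z^3/3 - 2*z^4/3 + z^5/3) * Φ j ^2
  + (2*z/3 - z^2 - z^3/3 + z^4 - z^5/3) * (Φ j * Φ (j+1))
  + (-(z^2/6) + 5*z^3/12 - z^4/3 + z^5/12) * Φ (j+1)^2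

lemma A5_expand (z σ τ : ℝ) (Φ : ℤ → ℝ) (j : ℤ) :
    A5 z σ τ Φ j
      = (-σ/2 + τ) * Φ (j-2) + (z/2 + z^2/2 + σ - 4*τ) * Φ (j-1)
        + (1 - z^2 + 6*τ) * Φ j + (-(z/2) + z^2/2 - σ - 4*τ) * Φ (j+1)
        + (σ/2 + τ) * Φ (j+2) := by
  simp only [A5, D0, Lap, D0Lap, Lap2]; ring

/-- The key pointwise energy identity for the interior rows. -/
lemma key_ident (z : ℝ) (Φ : ℤ → ℝ) (j : ℤ) :
    Φ j ^ 2 - (A5 z (z * (1 - z ^ 2) / 6) (-(z * (1 - z ^ 2) / 6) / 2) Φ j) ^ 2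
      = z*(1-z^2)*(2-z)/12 * (Lap Φ (j-1))^2
        + z^2*(1-z)^2*(2-z)*(1+z)/36 * (DLap Φ j)^2
        + Gbnd z Φ j - Gbnd z Φ (j-1) := by
  have e1 : j - 1 - 1 = j - 2 := by ring
  have e2 : j - 1 + 1 = j := by ring
  simp only [A5, D0, Lap, DLap, D0Lap, Lap2, Gbnd, e1, e2]
  ring

lemma sq5_le (a b c d e x : ℝ) (h : x = a + b + c + d + e) :
    x^2 ≤ 5*(a^2 + b^2 + c^2 + d^2 + e^2) := by
  subst h
  nlinarith [sq_nonneg (a-b), sq_nonneg (a-c), sq_nonneg (a-d), sq_nonneg (a-e),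
    sq_nonneg (b-c), sq_nonneg (b-d), sq_nonneg (b-e), sq_nonneg (c-d),
    sq_nonneg (c-e), sq_nonneg (d-e)]

lemma abs_mul_le_half_sq (a b : ℝ) : |a * b| ≤ (a^2 + b^2)/2 := by
  rw [abs_mul]
  nlinarith [sq_nonneg (|a| - |b|), sq_abs a, sq_abs b, abs_nonneg a, abs_nonneg b]

/-- Positivity of the boundary quadratic form. -/
lemma boundary_nonneg (z : ℝ) (hz0 : 0 < z) (hz1 : z < 1) (Φ : ℤ → ℝ)
    (hext1 : Lap Φ 0 = 0) :
    0 ≤ Gbnd z Φ (-1) + 1/2 * Φ 0 ^ 2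
        - 1/2 * (A5 z (z * (1 - z ^ 2) / 6) (-(z * (1 - z ^ 2) / 6) / 2) Φ 0) ^ 2 := by
  have h1 : Φ 1 = 2 * Φ 0 - Φ (-1) := by
    simp only [Lap] at hext1
    norm_num at hext1
    linarith
  have hK3 : 0 ≤ (2+z^2)*(23-2*z-11*z^2+2*z^3) - 3*z^2*(1-z^2) := by
    have h2 : z^2 ≤ 1 := by nlinarith
    have h3 : z^3 ≤ 1 := by nlinarith
    have h4 : z^4 ≤ 1 := by nlinarith
    have h5 : 0 ≤ z^5 := by positivity
    nlinarith
  have h1z : (0:ℝ) ≤ 1 - z^2 := by nlinarith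
  have key : 144*(2+z^2) * (Gbnd z Φ (-1) + 1/2 * Φ 0 ^ 2
        - 1/2 * (A5 z (z * (1 - z ^ 2) / 6) (-(z * (1 - z ^ 2) / 6) / 2) Φ 0) ^ 2)
      = z * ((2+z^2)*(12*(Φ 0) - 6*z*(Φ 0 - Φ (-1)) - (1-z^2)*(Φ 0 - 2 * Φ (-1) + Φ (-2)))^2
         + 3*(2*(2+z^2)*(Φ 0 - Φ (-1)) + z*(1-z^2)*(Φ 0 - 2 * Φ (-1) + Φ (-2)))^2
         + (1-z^2)*((2+z^2)*(23-2*z-11*z^2+2*z^3) - 3*z^2*(1-z^2))*(Φ 0 - 2 * Φ (-1) + Φ (-2))^2) := by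
    simp only [Gbnd, A5, D0, Lap, D0Lap, Lap2]
    norm_num
    rw [h1]
    ring
  have hR : 0 ≤ z * ((2+z^2)*(12*(Φ 0) - 6*z*(Φ 0 - Φ (-1)) - (1-z^2)*(Φ 0 - 2 * Φ (-1) + Φ (-2)))^2
         + 3*(2*(2+z^2)*(Φ 0 - Φ (-1)) + z*(1-z^2)*(Φ 0 - 2 * Φ (-1) + Φ (-2)))^2
         + (1-z^2)*((2+z^2)*(23-2*z-11*z^2+2*z^3) - 3*z^2*(1-z^2))*(Φ 0 - 2 * Φ (-1) + Φ (-2))^2) := by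
    apply mul_nonneg hz0.le
    have t1 : (0:ℝ) ≤ (2+z^2)*(12*(Φ 0) - 6*z*(Φ 0 - Φ (-1)) - (1-z^2)*(Φ 0 - 2 * Φ (-1) + Φ (-2)))^2 :=
      mul_nonneg (by positivity) (sq_nonneg _)
    have t2 : (0:ℝ) ≤ 3*(2*(2+z^2)*(Φ 0 - Φ (-1)) + z*(1-z^2)*(Φ 0 - 2 * Φ (-1) + Φ (-2)))^2 :=
      mul_nonneg (by norm_num) (sq_nonneg _)
    have t3 : (0:ℝ) ≤ (1-z^2)*((2+z^2)*(23-2*z-11*z^2+2*z^3) - 3*z^2*(1-z^2))*(Φ 0 - 2 * Φ (-1) + Φ (-2))^2 :=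
      mul_nonneg (mul_nonneg h1z hK3) (sq_nonneg _)
    linarith
  calc (0:ℝ) = (144*(2+z^2))⁻¹ * 0 := by ring
  _ ≤ (144*(2+z^2))⁻¹ * (144*(2+z^2) * (Gbnd z Φ (-1) + 1/2 * Φ 0 ^ 2
        - 1/2 * (A5 z (z * (1 - z ^ 2) / 6) (-(z * (1 - z ^ 2) / 6) / 2) Φ 0) ^ 2)) := by
      apply mul_le_mul_of_nonneg_left _ (by positivity)
      rw [key]; exact hR
  _ = _ := by field_simp

/-- The reindexing equivalence `ℕ ≃ {j : ℤ // j ≤ -1}`, `n ↦ -1 - n`. -/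
def negSucc : ℕ ≃ {j : ℤ // j ≤ -1} where
  toFun n := ⟨-1 - (n : ℤ), by omega⟩
  invFun j := (-1 - j.1).toNat
  left_inv n := by simp
  right_inv j := by
    apply Subtype.ext
    have := j.2
    simp only []
    omega

set_option maxHeartbeats 1600000 in
/-- Semi-boundedness of the five point scheme with `σ = z(1 - z²)/6`, `τ = -σ/2`
under the type-1 second order extrapolation conditions `(ΔΦ)₀ = (D₀ΔΦ)₀ = 0`. -/
theorem five_point_upwind_like_type1_extrapolation (z : ℝ) (hz : z ∈ Set.Ioo (0 : ℝ) 1)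
    (Φ : ℤ → ℝ) (hΦ : Summable (fun j : {j : ℤ // j ≤ 0} => (Φ j.1) ^ 2))
    (hext1 : Lap Φ 0 = 0) (hext2 : D0Lap Φ 0 = 0) :
    (∑' j : {j : ℤ // j ≤ -1},
        (A5 z (z * (1 - z ^ 2) / 6) (-(z * (1 - z ^ 2) / 6) / 2) Φ j.1) ^ 2)
        + 1 / 2 * (A5 z (z * (1 - z ^ 2) / 6) (-(z * (1 - z ^ 2) / 6) / 2) Φ 0) ^ 2
      ≤ (∑' j : {j : ℤ // j ≤ -1}, (Φ j.1) ^ 2) + 1 / 2 * (Φ 0) ^ 2 := by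
  obtain ⟨hz0, hz1⟩ := hz
  have h1zsq : (0:ℝ) < 1 - z^2 := by nlinarith
  have ha2 : (0:ℝ) ≤ z*(1-z^2)*(2-z)/12 := by
    have : (0:ℝ) ≤ z*(1-z^2)*(2-z) :=
      mul_nonneg (mul_nonneg hz0.le h1zsq.le) (by linarith)
    linarith
  have ha3 : (0:ℝ) ≤ z^2*(1-z)^2*(2-z)*(1+z)/36 := by
    have : (0:ℝ) ≤ z^2*(1-z)^2*(2-z)*(1+z) :=
      mul_nonneg (mul_nonneg (mul_nonneg (sq_nonneg z) (sq_nonneg (1-z))) (by linarith))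
        (by linarith)
    linarith
  -- summability of shifted squares
  have sumShift : ∀ c : ℤ, Summable (fun n : ℕ => Φ (c - n) ^ 2) := by
    intro c
    have base : ∀ d : ℤ, d ≤ 0 → Summable (fun n : ℕ => Φ (d - n) ^ 2) := by
      intro d hd
      have hinj : Function.Injective
          (fun n : ℕ => (⟨d - n, by omega⟩ : {j : ℤ // j ≤ 0})) := by
        intro a b hab
        simp only [Subtype.mk.injEq] at hab
        omega
      have h := hΦ.comp_injective hinj
      exact h.congr fun n => rfl
    have h1 : Summable (fun n : ℕ => Φ (c - c.toNat - n) ^ 2) := base _ (by omega)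
    have h2 : (fun n : ℕ => Φ (c - c.toNat - n) ^ 2)
        = fun n : ℕ => Φ (c - ((n + c.toNat : ℕ) : ℤ)) ^ 2 := by
      funext n
      have : c - (c.toNat : ℤ) - n = c - ((n + c.toNat : ℕ) : ℤ) := by push_cast; ring
      rw [this]
    rw [h2] at h1
    exact (summable_nat_add_iff c.toNat).mp h1
  have hP : Summable (fun n : ℕ => Φ (-1 - n) ^ 2) := sumShift (-1)
  -- expansion of Ψ along the half line
  have hΨexp : ∀ n : ℕ,
      A5 z (z * (1 - z ^ 2) / 6) (-(z * (1 - z ^ 2) / 6) / 2) Φ (-1 - n)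
      = (-(z * (1 - z ^ 2) / 6)/2 + (-(z * (1 - z ^ 2) / 6) / 2)) * Φ (-3 - n)
        + (z/2 + z^2/2 + (z * (1 - z ^ 2) / 6) - 4*(-(z * (1 - z ^ 2) / 6) / 2)) * Φ (-2 - n)
        + (1 - z^2 + 6*(-(z * (1 - z ^ 2) / 6) / 2)) * Φ (-1 - n)
        + (-(z/2) + z^2/2 - (z * (1 - z ^ 2) / 6) - 4*(-(z * (1 - z ^ 2) / 6) / 2)) * Φ (0 - n)
        + ((z * (1 - z ^ 2) / 6)/2 + (-(z * (1 - z ^ 2) / 6) / 2)) * Φ (1 - n) := by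
    intro n
    have h := A5_expand z (z * (1 - z ^ 2) / 6) (-(z * (1 - z ^ 2) / 6) / 2) Φ (-1 - n)
    have e1 : (-1 - (n:ℤ)) - 2 = -3 - n := by ring
    have e2 : (-1 - (n:ℤ)) - 1 = -2 - n := by ring
    have e3 : (-1 - (n:ℤ)) + 1 = 0 - n := by ring
    have e4 : (-1 - (n:ℤ)) + 2 = 1 - n := by ring
    rw [e1, e2, e3, e4] at h
    exact h
  -- summability of Ψ²
  have hQ : Summable (fun n : ℕ =>
      (A5 z (z * (1 - z ^ 2) / 6) (-(z * (1 - z ^ 2) / 6) / 2) Φ (-1 - n)) ^ 2) := by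
    have hbig : Summable (fun n : ℕ =>
        5*(((-(z * (1 - z ^ 2) / 6)/2 + (-(z * (1 - z ^ 2) / 6) / 2)) * Φ (-3 - n))^2
          + ((z/2 + z^2/2 + (z * (1 - z ^ 2) / 6) - 4*(-(z * (1 - z ^ 2) / 6) / 2)) * Φ (-2 - n))^2
          + ((1 - z^2 + 6*(-(z * (1 - z ^ 2) / 6) / 2)) * Φ (-1 - n))^2
          + ((-(z/2) + z^2/2 - (z * (1 - z ^ 2) / 6) - 4*(-(z * (1 - z ^ 2) / 6) / 2)) * Φ (0 - n))^2
          + (((z * (1 - z ^ 2) / 6)/2 + (-(z * (1 - z ^ 2) / 6) / 2)) * Φ (1 - n))^2)) := by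
      apply Summable.mul_left
      have s1 := (sumShift (-3)).mul_left ((-(z * (1 - z ^ 2) / 6)/2 + (-(z * (1 - z ^ 2) / 6) / 2))^2)
      have s2 := (sumShift (-2)).mul_left ((z/2 + z^2/2 + (z * (1 - z ^ 2) / 6) - 4*(-(z * (1 - z ^ 2) / 6) / 2))^2)
      have s3 := (sumShift (-1)).mul_left ((1 - z^2 + 6*(-(z * (1 - z ^ 2) / 6) / 2))^2)
      have s4 := (sumShift 0).mul_left ((-(z/2) + z^2/2 - (z * (1 - z ^ 2) / 6) - 4*(-(z * (1 - z ^ 2) / 6) / 2))^2)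
      have s5 := (sumShift 1).mul_left (((z * (1 - z ^ 2) / 6)/2 + (-(z * (1 - z ^ 2) / 6) / 2))^2)
      refine ((((s1.add s2).add s3).add s4).add s5).congr fun n => ?_
      ring
    refine Summable.of_nonneg_of_le (fun n => sq_nonneg _) (fun n => ?_) hbig
    exact sq5_le _ _ _ _ _ _ (hΨexp n)
  -- the dissipation terms
  have hLapexp : ∀ n : ℕ, Lap Φ (-2 - n)
      = Φ (-3 - n) + (-2) * Φ (-2 - n) + Φ (-1 - n) + 0 + 0 := by
    intro n
    have e1 : (-2 - (n:ℤ)) - 1 = -3 - n := by ring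
    have e2 : (-2 - (n:ℤ)) + 1 = -1 - n := by ring
    simp only [Lap, e1, e2]; ring
  have hDLapexp : ∀ n : ℕ, DLap Φ (-1 - n)
      = (-1) * Φ (-3 - n) + 3 * Φ (-2 - n) + (-3) * Φ (-1 - n) + Φ (0 - n) + 0 := by
    intro n
    have e1 : (-1 - (n:ℤ)) - 1 = -2 - n := by ring
    have e2 : (-1 - (n:ℤ)) + 1 = 0 - n := by ring
    have e3 : (-2 - (n:ℤ)) - 1 = -3 - n := by ring
    have e4 : (-2 - (n:ℤ)) + 1 = -1 - n := by ring
    simp only [DLap, Lap, e1, e2, e3, e4]; ring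
  have hNa : Summable (fun n : ℕ => (Lap Φ (-2 - n))^2) := by
    have hbig : Summable (fun n : ℕ =>
        5*((Φ (-3 - n))^2 + ((-2:ℝ) * Φ (-2 - n))^2 + (Φ (-1 - n))^2
          + (0:ℝ)^2 + (0:ℝ)^2)) := by
      apply Summable.mul_left
      have s1 := sumShift (-3)
      have s2 := (sumShift (-2)).mul_left 4
      have s3 := sumShift (-1)
      refine ((s1.add s2).add s3).congr fun n => ?_
      ring
    refine Summable.of_nonneg_of_le (fun n => sq_nonneg _) (fun n => ?_) hbig
    exact sq5_le _ _ _ _ _ _ (hLapexp n)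
  have hNb : Summable (fun n : ℕ => (DLap Φ (-1 - n))^2) := by
    have hbig : Summable (fun n : ℕ =>
        5*(((-1:ℝ) * Φ (-3 - n))^2 + ((3:ℝ) * Φ (-2 - n))^2 + ((-3:ℝ) * Φ (-1 - n))^2
          + (Φ (0 - n))^2 + (0:ℝ)^2)) := by
      apply Summable.mul_left
      have s1 := sumShift (-3)
      have s2 := (sumShift (-2)).mul_left 9
      have s3 := (sumShift (-1)).mul_left 9
      have s4 := sumShift 0
      refine (((s1.add s2).add s3).add s4).congr fun n => ?_
      ring
    refine Summable.of_nonneg_of_le (fun n => sq_nonneg _) (fun n => ?_) hbig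
    exact sq5_le _ _ _ _ _ _ (hDLapexp n)
  have hNf : Summable (fun n : ℕ =>
      z*(1-z^2)*(2-z)/12 * (Lap Φ (-2 - n))^2
      + z^2*(1-z)^2*(2-z)*(1+z)/36 * (DLap Φ (-1 - n))^2) :=
    (hNa.mul_left _).add (hNb.mul_left _)
  -- the key pointwise identity, reindexed
  have hkey : ∀ n : ℕ, Φ (-1 - n) ^ 2
      - (A5 z (z * (1 - z ^ 2) / 6) (-(z * (1 - z ^ 2) / 6) / 2) Φ (-1 - n)) ^ 2
      = (z*(1-z^2)*(2-z)/12 * (Lap Φ (-2 - n))^2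
          + z^2*(1-z)^2*(2-z)*(1+z)/36 * (DLap Φ (-1 - n))^2)
        + (Gbnd z Φ (-1 - n) - Gbnd z Φ (-1 - ((n+1 : ℕ) : ℤ))) := by
    intro n
    have h := key_ident z Φ (-1 - n)
    have e1 : (-1 - (n:ℤ)) - 1 = -2 - n := by ring
    have e2 : (-1 - ((n+1 : ℕ) : ℤ)) = -2 - (n:ℤ) := by push_cast; ring
    rw [e1] at h
    rw [e2]
    linarith [h]
  have htelS : Summable (fun n : ℕ =>
      Gbnd z Φ (-1 - n) - Gbnd z Φ (-1 - ((n+1 : ℕ) : ℤ))) := by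
    have heq : (fun n : ℕ => Gbnd z Φ (-1 - n) - Gbnd z Φ (-1 - ((n+1 : ℕ) : ℤ)))
        = fun n : ℕ => (Φ (-1 - n) ^ 2
            - (A5 z (z * (1 - z ^ 2) / 6) (-(z * (1 - z ^ 2) / 6) / 2) Φ (-1 - n)) ^ 2)
            - (z*(1-z^2)*(2-z)/12 * (Lap Φ (-2 - n))^2
              + z^2*(1-z)^2*(2-z)*(1+z)/36 * (DLap Φ (-1 - n))^2) := by
      funext n
      have := hkey n
      linarith
    rw [heq]
    exact (hP.sub hQ).sub hNf
  -- limit of the boundary functional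
  have hsqlim : ∀ c : ℤ, Filter.Tendsto (fun n : ℕ => Φ (c - n) ^ 2)
      Filter.atTop (nhds 0) := fun c => (sumShift c).tendsto_atTop_zero
  have hprod : ∀ c d : ℤ, Filter.Tendsto (fun n : ℕ => Φ (c - n) * Φ (d - n))
      Filter.atTop (nhds 0) := by
    intro c d
    have hb : Filter.Tendsto (fun n : ℕ => (Φ (c - n)^2 + Φ (d - n)^2)/2)
        Filter.atTop (nhds 0) := by
      have := ((hsqlim c).add (hsqlim d)).div_const 2
      simpa using this
    refine squeeze_zero_norm (fun n => ?_) hb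
    rw [Real.norm_eq_abs]
    exact abs_mul_le_half_sq _ _
  have hGlim : Filter.Tendsto (fun n : ℕ => Gbnd z Φ (-1 - n)) Filter.atTop (nhds 0) := by
    have hGeq : (fun n : ℕ => Gbnd z Φ (-1 - n))
        = fun n : ℕ =>
          (z/6 - z^3/4 + z^5/12) * (Φ (-2 - n) * Φ (-2 - n))
          + (-(2*z/3) - z^2/3 + z^3 + z^4/3 - z^5/3) * (Φ (-2 - n) * Φ (-1 - n))
          + (z^2/3 - z^3/6 - z^4/3 + z^5/6) * (Φ (-2 - n) * Φ (0 - n))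
          + (5*z/6 + 7*z^2/6 - 2*z^3/3 - 2*z^4/3 + z^5/3) * (Φ (-1 - n) * Φ (-1 - n))
          + (2*z/3 - z^2 - z^3/3 + z^4 - z^5/3) * (Φ (-1 - n) * Φ (0 - n))
          + (-(z^2/6) + 5*z^3/12 - z^4/3 + z^5/12) * (Φ (0 - n) * Φ (0 - n)) := by
      funext n
      have e1 : (-1 - (n:ℤ)) - 1 = -2 - n := by ring
      have e2 : (-1 - (n:ℤ)) + 1 = 0 - n := by ring
      simp only [Gbnd, e1, e2]; ring
    rw [hGeq]
    have T : ∀ (a : ℝ) (c d : ℤ), Filter.Tendsto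
        (fun n : ℕ => a * (Φ (c - n) * Φ (d - n))) Filter.atTop (nhds 0) := by
      intro a c d
      have := (hprod c d).const_mul a
      simpa using this
    have := ((((((T (z/6 - z^3/4 + z^5/12) (-2) (-2)).add
      (T (-(2*z/3) - z^2/3 + z^3 + z^4/3 - z^5/3) (-2) (-1))).add
      (T (z^2/3 - z^3/6 - z^4/3 + z^5/6) (-2) 0)).add
      (T (5*z/6 + 7*z^2/6 - 2*z^3/3 - 2*z^4/3 + z^5/3) (-1) (-1))).add
      (T (2*z/3 - z^2 - z^3/3 + z^4 - z^5/3) (-1) 0)).add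
      (T (-(z^2/6) + 5*z^3/12 - z^4/3 + z^5/12) 0 0))
    simpa using this
  -- telescoping sum
  have htel : (∑' n : ℕ, (Gbnd z Φ (-1 - n) - Gbnd z Φ (-1 - ((n+1 : ℕ) : ℤ))))
      = Gbnd z Φ (-1 - ((0:ℕ) : ℤ)) := by
    have hpartial : Filter.Tendsto
        (fun N : ℕ => ∑ n ∈ Finset.range N,
          (Gbnd z Φ (-1 - n) - Gbnd z Φ (-1 - ((n+1 : ℕ) : ℤ))))
        Filter.atTop (nhds (Gbnd z Φ (-1 - ((0:ℕ) : ℤ)))) := by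
      have heq : ∀ N : ℕ, ∑ n ∈ Finset.range N,
          (Gbnd z Φ (-1 - n) - Gbnd z Φ (-1 - ((n+1 : ℕ) : ℤ)))
          = Gbnd z Φ (-1 - ((0:ℕ) : ℤ)) - Gbnd z Φ (-1 - (N : ℤ)) := by
        intro N
        exact Finset.sum_range_sub' (fun n : ℕ => Gbnd z Φ (-1 - (n : ℤ))) N
      rw [funext heq]
      simpa using tendsto_const_nhds.sub hGlim
    exact tendsto_nhds_unique htelS.hasSum.tendsto_sum_nat hpartial
  -- assembling the sums
  have hsplit : (∑' n : ℕ, Φ (-1 - n) ^ 2)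
      - (∑' n : ℕ, (A5 z (z * (1 - z ^ 2) / 6) (-(z * (1 - z ^ 2) / 6) / 2) Φ (-1 - n)) ^ 2)
      = (∑' n : ℕ, (z*(1-z^2)*(2-z)/12 * (Lap Φ (-2 - n))^2
          + z^2*(1-z)^2*(2-z)*(1+z)/36 * (DLap Φ (-1 - n))^2))
        + Gbnd z Φ (-1 - ((0:ℕ) : ℤ)) := by
    rw [← htel, ← Summable.tsum_add hNf htelS, ← Summable.tsum_sub hP hQ]
    exact tsum_congr fun n => hkey n
  have hNn : 0 ≤ ∑' n : ℕ, (z*(1-z^2)*(2-z)/12 * (Lap Φ (-2 - n))^2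
      + z^2*(1-z)^2*(2-z)*(1+z)/36 * (DLap Φ (-1 - n))^2) :=
    tsum_nonneg fun n =>
      add_nonneg (mul_nonneg ha2 (sq_nonneg _)) (mul_nonneg ha3 (sq_nonneg _))
  have hB : 0 ≤ Gbnd z Φ (-1 - ((0:ℕ) : ℤ)) + 1/2 * Φ 0 ^ 2
      - 1/2 * (A5 z (z * (1 - z ^ 2) / 6) (-(z * (1 - z ^ 2) / 6) / 2) Φ 0) ^ 2 := by
    have e0 : (-1 - ((0:ℕ) : ℤ)) = -1 := by norm_num
    rw [e0]
    exact boundary_nonneg z hz0 hz1 Φ hext1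
  -- reindex the subtype sums
  have hre1 : (∑' j : {j : ℤ // j ≤ -1},
        (A5 z (z * (1 - z ^ 2) / 6) (-(z * (1 - z ^ 2) / 6) / 2) Φ j.1) ^ 2)
      = ∑' n : ℕ, (A5 z (z * (1 - z ^ 2) / 6) (-(z * (1 - z ^ 2) / 6) / 2) Φ (-1 - n)) ^ 2 := by
    rw [← Equiv.tsum_eq negSucc (fun j : {j : ℤ // j ≤ -1} =>
      (A5 z (z * (1 - z ^ 2) / 6) (-(z * (1 - z ^ 2) / 6) / 2) Φ j.1) ^ 2)]
    rfl
  have hre2 : (∑' j : {j : ℤ // j ≤ -1}, (Φ j.1) ^ 2) = ∑' n : ℕ, Φ (-1 - n) ^ 2 := by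
    rw [← Equiv.tsum_eq negSucc (fun j : {j : ℤ // j ≤ -1} => (Φ j.1) ^ 2)]
    rfl
  rw [hre1, hre2]
  linarith [hsplit, hNn, hB]
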